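/- arXiv:2012.04106 — 2 statements merged into one kernel-verified Lean document; each statement's English description precedes it below -/
import Mathlib

section
/- A linear map λ : T_n(q) → k is a partial action of the Taft algebra T_n(q) on k if and only if λ = ε (the counit, i.e. the global action), or λ = λ_N^0 for some non-trivial subgroup N of the group ⟨g⟩ ≅ C_n of group-like elements (i.e. {1} ≠ N ≠ ⟨g⟩), or λ = λ_α for some α ∈ k. (Theorem 3.1.1) -/
open scoped TensorProduct

/-- The Gaussian binomial coefficient `binom(m, ℓ)_q` in a field `k`, defined by
`binom(0,0)_q = 1`, `binom(m,ℓ)_q = 0` for `ℓ < 0` or `ℓ > m`, and the q-Pascal rule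
`binom(i,s)_q = binom(i-1,s-1)_q + q^s · binom(i-1,s)_q` for `i ≥ 1`. -/
def qbinom {k : Type*} [Field k] (q : k) : ℕ → ℤ → k
  | 0, s => if s = 0 then 1 else 0
  | (i + 1), s => qbinom q i (s - 1) + q ^ s.toNat * qbinom q i s

/-- The q-number `(m)_q = 1 + q + ⋯ + q^{m−1}`. -/
def qnum {k : Type*} [Field k] (q : k) (m : ℕ) : k := ∑ l ∈ Finset.range m, q ^ l

/-- The q-factorial `(m)_q! = (m)_q (m−1)_q ⋯ (1)_q`, with `(0)_q! = 1`. -/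
def qfact {k : Type*} [Field k] (q : k) : ℕ → k
  | 0 => 1
  | (m + 1) => qnum q (m + 1) * qfact q m

/-- The linear map `h ↦ Σ λ(h₁) h₂` (Sweedler notation). -/
noncomputable def lCont (k H : Type*) [CommSemiring k] [Semiring H] [Bialgebra k H]
    (lam : H →ₗ[k] k) : H →ₗ[k] H :=
  (TensorProduct.lid k H).toLinearMap ∘ₗ TensorProduct.map lam LinearMap.id ∘ₗ Coalgebra.comul

/-- The linear map `h ↦ Σ h₁ λ(h₂)` (Sweedler notation). -/
noncomputable def rCont (k H : Type*) [CommSemiring k] [Semiring H] [Bialgebra k H]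
    (lam : H →ₗ[k] k) : H →ₗ[k] H :=
  (TensorProduct.rid k H).toLinearMap ∘ₗ TensorProduct.map LinearMap.id lam ∘ₗ Coalgebra.comul

/-- A partial action of a bialgebra `H` on its base field `k`: a linear map `λ : H → k` with
`λ(1) = 1` and `λ(h)λ(y) = Σ λ(h₁)λ(h₂y)` for all `h, y ∈ H`; by linearity the right-hand side
is `λ((Σ λ(h₁) h₂) · y)`. -/
def IsPartialAction (k H : Type*) [CommSemiring k] [Semiring H] [Bialgebra k H]
    (lam : H →ₗ[k] k) : Prop :=
  lam 1 = 1 ∧ ∀ h y : H, lam h * lam y = lam (lCont k H lam h * y)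

/-- A symmetric partial action additionally satisfies `λ(h)λ(y) = Σ λ(h₁y)λ(h₂)`, i.e.
`λ(h)λ(y) = λ((Σ h₁ λ(h₂)) · y)`. -/
def IsSymmPartialAction (k H : Type*) [CommSemiring k] [Semiring H] [Bialgebra k H]
    (lam : H →ₗ[k] k) : Prop :=
  IsPartialAction k H lam ∧ ∀ h y : H, lam h * lam y = lam (rCont k H lam h * y)

/-- A realization of the Taft algebra `T_n(q)`: a Hopf algebra `H` over `k` with generators
`g, x` satisfying `g^n = 1`, `x^n = 0`, `xg = q·gx`, such that `{g^i x^j : 0 ≤ i,j ≤ n−1}` is a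
`k`-basis, `g` is group-like and `x` is `(1,g)`-primitive. -/
structure TaftData (k : Type*) [Field k] (n : ℕ) (q : k) (H : Type*)
    [Ring H] [HopfAlgebra k H] where
  g : H
  x : H
  g_pow_n : g ^ n = 1
  x_pow_n : x ^ n = 0
  x_mul_g : x * g = q • (g * x)
  basis : Module.Basis (Fin n × Fin n) k H
  basis_eq : ∀ i j : Fin n, basis (i, j) = g ^ (i : ℕ) * x ^ (j : ℕ)
  comul_g : Coalgebra.comul (R := k) g = g ⊗ₜ[k] g
  comul_x : Coalgebra.comul (R := k) x = x ⊗ₜ[k] (1 : H) + g ⊗ₜ[k] x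
  counit_g : Coalgebra.counit (R := k) g = 1
  counit_x : Coalgebra.counit (R := k) x = 0

/-!
Taking `h = g^i x^j` in the partial-action identity, `j = 0` shows that `{i | λ(g^i) = 1}` is the
set of multiples of some `a ∣ n`, and `j = 1` gives the recursion
`q^(m+1) λ(g^m x^(d+1)) = λ(g^(n-1) x) (λ(g^(m+1) x^d) - λ(g^m x^d))`, which determines `λ` from
`a` and `α = λ(x)`. If `a = 1` then `λ = ε`; if `1 < a < n`, comparing `λ(g^a x)` with `λ(x)`
forces `α = 0` and `λ` vanishes off the group-likes; if `a = n` the recursion is solved by the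
q-Pascal rule and `λ = λ_α`.

Conversely, if `H` acts on a commutative algebra `A` as a module algebra and `e ∈ A` satisfies
`e w = χ(w) e` for a character `χ` with `χ(e) = 1`, then `h ↦ χ(h · e)` is a partial action. On
`A = k^(ℤ/m)` with `e = δ₀` and `χ = ev₀`, the assignment `g ↦ translation`,
`x ↦ u · (translation - 1)` is such an action when `m ∣ n` and `u(s) = q u(s+1)` (the relation
`x^n = 0` holds because the inner Gaussian binomials `binom(n, ℓ)_q` vanish). The resulting `λ`
takes the values `[m ∣ i]` on `g^i` and `-u(0)` on `x`, so by the first part it is `λ_N^0` for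
`m = a`, `u = 0`, and `λ_α` for `m = n`, `u(0) = -α`.
-/

section QBinomial

variable {k : Type*} [Field k] (q : k)

theorem qbinom_succ (m : ℕ) (s : ℤ) :
    qbinom q (m + 1) s = qbinom q m (s - 1) + q ^ s.toNat * qbinom q m s := rfl

theorem qbinom_succ_succ (m s : ℕ) :
    qbinom q (m + 1) (s + 1 : ℕ) = qbinom q m s + q ^ (s + 1) * qbinom q m (s + 1 : ℕ) := by
  rw [qbinom_succ]
  push_cast
  rw [add_sub_cancel_right, Int.toNat_natCast_add_one]

theorem qbinom_of_neg {s : ℤ} (hs : s < 0) (m : ℕ) : qbinom q m s = 0 := by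
  induction m generalizing s with
  | zero => simp [qbinom, hs.ne]
  | succ m ih => rw [qbinom_succ, ih hs, ih (by omega), mul_zero, add_zero]

theorem qbinom_eq_zero_of_lt {m : ℕ} {s : ℤ} (h : (m : ℤ) < s) : qbinom q m s = 0 := by
  induction m generalizing s with
  | zero => simp only [qbinom, Nat.cast_zero] at h ⊢; rw [if_neg h.ne']
  | succ m ih => rw [qbinom_succ, ih (by omega), ih (by omega), mul_zero, add_zero]

@[simp] theorem qbinom_zero_right (m : ℕ) : qbinom q m 0 = 1 := by
  induction m with
  | zero => simp [qbinom]
  | succ m ih => simp [qbinom_succ, ih, qbinom_of_neg q (s := -1) (by norm_num)]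

@[simp] theorem qbinom_self (m : ℕ) : qbinom q m m = 1 := by
  induction m with
  | zero => simp [qbinom]
  | succ m ih =>
    rw [qbinom_succ_succ, ih, qbinom_eq_zero_of_lt q (by omega), mul_zero, add_zero]

theorem qnum_add (s t : ℕ) : qnum q (s + t) = qnum q s + q ^ s * qnum q t := by
  simp [qnum, Finset.sum_range_add, Finset.mul_sum, pow_add]

theorem qfact_succ (m : ℕ) : qfact q (m + 1) = qnum q (m + 1) * qfact q m := rfl

theorem qbinom_mul_qfact_mul_qfact {m s : ℕ} (hs : s ≤ m) :
    qbinom q m s * qfact q s * qfact q (m - s) = qfact q m := by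
  induction m generalizing s with
  | zero =>
    obtain rfl : s = 0 := by omega
    simp [qfact]
  | succ m ih =>
    rcases s with _ | s
    · simp [qfact]
    rcases hs.lt_or_eq with hs | hs
    · obtain ⟨t, rfl⟩ : ∃ t, m = s + 1 + t := ⟨m - (s + 1), by omega⟩
      have h₁ := ih (s := s) (by omega)
      have h₂ := ih (s := s + 1) (by omega)
      rw [show s + 1 + t - s = t + 1 by omega, qfact_succ q t] at h₁
      rw [show s + 1 + t - (s + 1) = t by omega, qfact_succ q s] at h₂
      have hnum : qnum q (s + 1 + t + 1) = qnum q (s + 1) + q ^ (s + 1) * qnum q (t + 1) := by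
        rw [← qnum_add, add_assoc]
      rw [qbinom_succ_succ, show s + 1 + t + 1 - (s + 1) = t + 1 by omega, qfact_succ q (s + 1 + t),
        hnum, qfact_succ q s, qfact_succ q t]
      linear_combination qnum q (s + 1) * h₁ + q ^ (s + 1) * qnum q (t + 1) * h₂
    · obtain rfl : s = m := by omega
      rw [qbinom_self, Nat.sub_self, qfact, one_mul, mul_one]

variable {q} {n : ℕ}

theorem IsPrimitiveRoot.qnum_ne_zero (hq : IsPrimitiveRoot q n) {t : ℕ} (ht₀ : t ≠ 0)
    (ht : t < n) : qnum q t ≠ 0 := by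
  intro h
  have h' := geom_sum_mul q t
  rw [← qnum, h, zero_mul, eq_comm, sub_eq_zero] at h'
  exact hq.pow_ne_one_of_pos_of_lt ht₀ ht h'

theorem IsPrimitiveRoot.qfact_ne_zero (hq : IsPrimitiveRoot q n) {t : ℕ} (ht : t < n) :
    qfact q t ≠ 0 := by
  induction t with
  | zero => exact one_ne_zero
  | succ t ih => exact mul_ne_zero (hq.qnum_ne_zero t.succ_ne_zero ht) (ih (by omega))

theorem IsPrimitiveRoot.qbinom_eq_zero (hq : IsPrimitiveRoot q n) {ℓ : ℕ} (h₀ : ℓ ≠ 0)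
    (hℓ : ℓ < n) : qbinom q n ℓ = 0 := by
  have hfact : qfact q n = 0 := by
    obtain ⟨m, rfl⟩ : ∃ m, n = m + 1 := ⟨n - 1, by omega⟩
    rw [qfact_succ, qnum, hq.geom_sum_eq_zero (by omega), zero_mul]
  have key := qbinom_mul_qfact_mul_qfact q hℓ.le
  rw [hfact, mul_assoc, mul_eq_zero] at key
  exact key.resolve_right (mul_ne_zero (hq.qfact_ne_zero hℓ) (hq.qfact_ne_zero (by omega)))

theorem IsPrimitiveRoot.pow_mul_pred_div_two (hq : IsPrimitiveRoot q n) (hn : 0 < n) :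
    q ^ (n * (n - 1) / 2) = (-1) ^ (n - 1) := by
  rcases Nat.even_or_odd' n with ⟨t, rfl | rfl⟩
  · have ht : t ≠ 0 := by omega
    have hqt : q ^ t = -1 := by
      have h2 := hq.pow_of_dvd ht (dvd_mul_left t 2)
      rw [Nat.mul_div_cancel _ (Nat.pos_of_ne_zero ht)] at h2
      exact h2.eq_neg_one_of_two_right
    rw [show 2 * t * (2 * t - 1) / 2 = t * (2 * t - 1) by
      rw [mul_assoc, Nat.mul_div_cancel_left _ two_pos], pow_mul, hqt]
  · rw [show (2 * t + 1) * (2 * t + 1 - 1) / 2 = (2 * t + 1) * t by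
      rw [Nat.add_sub_cancel, mul_left_comm, Nat.mul_div_cancel_left _ two_pos],
      pow_mul, hq.pow_eq_one, one_pow, Nat.add_sub_cancel, pow_mul, neg_one_sq, one_pow]

end QBinomial

section QCommute

variable {k R : Type*} [CommSemiring k] [Semiring R] [Algebra k R]

def QCommute (q : k) (a b : R) : Prop := a * b = q • (b * a)

variable {q : k} {a b : R}

theorem QCommute.mul_pow (h : QCommute q a b) (m : ℕ) : a * b ^ m = q ^ m • (b ^ m * a) := by
  induction m with
  | zero => simp
  | succ m ih =>
    rw [pow_succ, ← mul_assoc, ih, smul_mul_assoc, mul_assoc, h, pow_succ, mul_smul_comm,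
      smul_smul, mul_assoc]

theorem QCommute.pow_mul_pow (h : QCommute q a b) (e m : ℕ) :
    a ^ e * b ^ m = q ^ (m * e) • (b ^ m * a ^ e) := by
  induction e with
  | zero => simp
  | succ e ih =>
    rw [pow_succ, mul_assoc, h.mul_pow, mul_smul_comm, ← mul_assoc, ih, smul_mul_assoc, smul_smul,
      ← pow_add, mul_assoc, ← pow_succ, Nat.mul_succ, add_comm m]

theorem QCommute.mul_mul_mul (h : QCommute q a b) (i j c d : ℕ) :
    (b ^ i * a ^ j) * (b ^ c * a ^ d) = q ^ (c * j) • (b ^ (i + c) * a ^ (j + d)) := by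
  rw [mul_assoc, ← mul_assoc (a ^ j), h.pow_mul_pow, smul_mul_assoc, mul_smul_comm, pow_add,
    pow_add, mul_assoc, mul_assoc]

theorem QCommute.add_pow {k R : Type*} [Field k] [Ring R] [Algebra k R] {q : k} {a b : R}
    (h : QCommute q a b) (m : ℕ) :
    (a + b) ^ m = ∑ ℓ ∈ Finset.range (m + 1), qbinom q m ℓ • (b ^ ℓ * a ^ (m - ℓ)) := by
  induction m with
  | zero => simp
  | succ m ih =>
    have hterm : ∀ ℓ ∈ Finset.range (m + 1), (a + b) * (qbinom q m ℓ • (b ^ ℓ * a ^ (m - ℓ)))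
        = (q ^ ℓ * qbinom q m ℓ) • (b ^ ℓ * a ^ (m + 1 - ℓ))
          + qbinom q m ℓ • (b ^ (ℓ + 1) * a ^ (m - ℓ)) := by
      intro ℓ hℓ
      rw [Finset.mem_range] at hℓ
      rw [mul_smul_comm, add_mul, ← mul_assoc, h.mul_pow, smul_mul_assoc, mul_assoc, ← pow_succ',
        ← mul_assoc, ← pow_succ', smul_add, smul_smul, mul_comm (qbinom q m ℓ),
        show m + 1 - ℓ = m - ℓ + 1 by omega]
    have hshift : ∑ s ∈ Finset.range (m + 2), qbinom q m ((s : ℤ) - 1) • (b ^ s * a ^ (m + 1 - s))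
        = ∑ ℓ ∈ Finset.range (m + 1), qbinom q m ℓ • (b ^ (ℓ + 1) * a ^ (m - ℓ)) := by
      rw [Finset.sum_range_succ', Nat.cast_zero, zero_sub, qbinom_of_neg q (by norm_num),
        zero_smul, add_zero]
      simp
    have htop : ∑ s ∈ Finset.range (m + 2), (q ^ s * qbinom q m s) • (b ^ s * a ^ (m + 1 - s))
        = ∑ ℓ ∈ Finset.range (m + 1), (q ^ ℓ * qbinom q m ℓ) • (b ^ ℓ * a ^ (m + 1 - ℓ)) := by
      rw [Finset.sum_range_succ, qbinom_eq_zero_of_lt q (by push_cast; omega), mul_zero,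
        zero_smul, add_zero]
    rw [pow_succ', ih, Finset.mul_sum, Finset.sum_congr rfl hterm, Finset.sum_add_distrib,
      ← hshift, ← htop, add_comm, ← Finset.sum_add_distrib]
    refine Finset.sum_congr rfl fun s _ => ?_
    rw [← add_smul, qbinom_succ, Int.toNat_natCast]

end QCommute

section AlphaCoeff

variable {k : Type*} [Field k] (q α : k)

/-- `λ_α(g^{n-i} x^j)`. -/
def lamAlphaCoeff (i j : ℕ) : k := (-1) ^ i * q ^ (i * (i + 1) / 2) * qbinom q j i * α ^ j

theorem lamAlphaCoeff_zero_left (j : ℕ) : lamAlphaCoeff q α 0 j = α ^ j := by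
  simp [lamAlphaCoeff]

theorem lamAlphaCoeff_zero_right (i : ℕ) : lamAlphaCoeff q α i 0 = if i = 0 then 1 else 0 := by
  rcases i with _ | i
  · simp [lamAlphaCoeff]
  · rw [lamAlphaCoeff, qbinom_eq_zero_of_lt q (by omega)]
    simp

theorem lamAlphaCoeff_of_lt {i j : ℕ} (h : j < i) : lamAlphaCoeff q α i j = 0 := by
  rw [lamAlphaCoeff, qbinom_eq_zero_of_lt q (by omega), mul_zero, zero_mul]

theorem lamAlphaCoeff_succ_succ (s j : ℕ) :
    lamAlphaCoeff q α (s + 1) (j + 1)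
      = -(q ^ (s + 1) * α) * (lamAlphaCoeff q α s j - lamAlphaCoeff q α (s + 1) j) := by
  have htri : (s + 1) * (s + 1 + 1) / 2 = s * (s + 1) / 2 + (s + 1) := by
    rw [show (s + 1) * (s + 1 + 1) = s * (s + 1) + 2 * (s + 1) by ring,
      Nat.add_mul_div_left _ _ two_pos]
  simp only [lamAlphaCoeff, qbinom_succ_succ, htri, pow_add, pow_succ]
  ring

end AlphaCoeff

theorem Nat.exists_forall_iff_dvd_of_add {P : ℕ → Prop} {n : ℕ} (hn : 0 < n) (hPn : P n)
    (hadd : ∀ i c, P i → (P (i + c) ↔ P c)) : ∃ a, 0 < a ∧ ∀ m, P m ↔ a ∣ m := by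
  classical
  have hex : ∃ a, 0 < a ∧ P a := ⟨n, hn, hPn⟩
  obtain ⟨ha, hPa⟩ := Nat.find_spec hex
  have hmul : ∀ t c, P (Nat.find hex * t + c) ↔ P c := by
    intro t c
    induction t with
    | zero => simp
    | succ t ih => rw [mul_add_one, add_right_comm, add_comm, hadd _ _ hPa, ih]
  refine ⟨Nat.find hex, ha, fun m => ⟨fun hm => ?_, fun ⟨t, ht⟩ => ?_⟩⟩
  · rw [← Nat.div_add_mod m (Nat.find hex), hmul] at hm
    by_contra hdvd
    exact Nat.find_min hex (Nat.mod_lt m ha)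
      ⟨Nat.pos_of_ne_zero (mt Nat.dvd_of_mod_eq_zero hdvd), hm⟩
  · rw [ht, ← add_zero (_ * t), hmul, ← (hadd _ 0 hPa), add_zero]
    exact hPa

section ModuleAlgebra

variable {k H A : Type*} [CommSemiring k] [Semiring H] [Bialgebra k H] [CommSemiring A]
  [Algebra k A]

noncomputable def tensorAction (ρ : H →ₐ[k] Module.End k A) : H →ₐ[k] Module.End k (A ⊗[k] A) :=
  Module.endTensorEndAlgHom.comp ((Algebra.TensorProduct.map ρ ρ).comp (Bialgebra.comulAlgHom k H))

theorem endTensorEndAlgHom_tmul_tmul (f f' : Module.End k A) (a b : A) :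
    Module.endTensorEndAlgHom (R := k) (S := k) (A := k) (f ⊗ₜ[k] f') (a ⊗ₜ[k] b)
      = f a ⊗ₜ f' b := rfl

/-- The elements `h` with `h(ab) = Σ h₁(a) h₂(b)` for all `a, b`. -/
def measuringSubalgebra (ρ : H →ₐ[k] Module.End k A) : Subalgebra k H where
  carrier := {h | ρ h ∘ₗ LinearMap.mul' k A = LinearMap.mul' k A ∘ₗ tensorAction ρ h}
  mul_mem' {h h'} hh hh' := by
    simp only [Set.mem_ofPred_eq, map_mul, Module.End.mul_eq_comp] at *
    rw [LinearMap.comp_assoc, hh', ← LinearMap.comp_assoc, hh, LinearMap.comp_assoc]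
  add_mem' {h h'} hh hh' := by
    simp only [Set.mem_ofPred_eq, map_add, LinearMap.add_comp, LinearMap.comp_add] at *
    rw [hh, hh']
  algebraMap_mem' c := by
    simp only [Set.mem_ofPred_eq, AlgHom.commutes, Module.algebraMap_end_eq_smul_id,
      LinearMap.smul_comp, LinearMap.comp_smul, LinearMap.id_comp, LinearMap.comp_id]

noncomputable def evalAt (ρ : H →ₐ[k] Module.End k A) (χ : A →ₐ[k] k) (e : A) : H →ₗ[k] k :=
  χ.toLinearMap ∘ₗ LinearMap.applyₗ e ∘ₗ ρ.toLinearMap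

theorem evalAt_apply (ρ : H →ₐ[k] Module.End k A) (χ : A →ₐ[k] k) (e : A) (h : H) :
    evalAt ρ χ e h = χ (ρ h e) := rfl

theorem isPartialAction_evalAt {ρ : H →ₐ[k] Module.End k A} (hρ : measuringSubalgebra ρ = ⊤)
    {χ : A →ₐ[k] k} {e : A} (hχe : χ e = 1) (he : ∀ w, e * w = χ w • e) :
    IsPartialAction k H (evalAt ρ χ e) := by
  refine ⟨by rw [evalAt_apply, map_one, Module.End.one_apply, hχe], fun h y => ?_⟩
  have hmeas : ∀ a b, ρ h (a * b) = LinearMap.mul' k A (tensorAction ρ h (a ⊗ₜ b)) := fun a b =>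
    LinearMap.congr_fun ((Subalgebra.ext_iff.mp hρ h).mpr trivial) (a ⊗ₜ b)
  have hsplit : ∀ t : H ⊗[k] H, χ (LinearMap.mul' k A
      (Module.endTensorEndAlgHom (R := k) (S := k) (A := k) (Algebra.TensorProduct.map ρ ρ t)
        (e ⊗ₜ ρ y e)))
      = χ (ρ (TensorProduct.lid k H (TensorProduct.map (evalAt ρ χ e) LinearMap.id t))
          (ρ y e)) := by
    intro t
    induction t using TensorProduct.induction_on with
    | zero => simp
    | tmul h₁ h₂ =>
      rw [Algebra.TensorProduct.map_tmul, endTensorEndAlgHom_tmul_tmul, LinearMap.mul'_apply,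
        map_mul, TensorProduct.map_tmul, LinearMap.id_apply, TensorProduct.lid_tmul, map_smul,
        LinearMap.smul_apply, map_smul, smul_eq_mul, evalAt_apply]
    | add t t' ht ht' => simp only [map_add, LinearMap.add_apply, ht, ht']
  calc evalAt ρ χ e h * evalAt ρ χ e y = χ (ρ h (χ (ρ y e) • e)) := by
        rw [map_smul, map_smul, evalAt_apply, evalAt_apply, smul_eq_mul, mul_comm]
    _ = χ (ρ h (e * ρ y e)) := by rw [he]
    _ = _ := by
        rw [hmeas, tensorAction, AlgHom.comp_apply, AlgHom.comp_apply, Bialgebra.comulAlgHom_apply,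
          hsplit, evalAt_apply, map_mul, Module.End.mul_apply]
        rfl

end ModuleAlgebra

theorem isPartialAction_counit {k H : Type*} [CommSemiring k] [Semiring H] [Bialgebra k H] :
    IsPartialAction k H Coalgebra.counit := by
  refine ⟨Bialgebra.counit_one, fun h y => ?_⟩
  have hid : lCont k H Coalgebra.counit h = h := by
    rw [lCont, LinearMap.comp_apply, LinearMap.comp_apply, ← LinearMap.rTensor,
      Coalgebra.rTensor_counit_comul, LinearEquiv.coe_coe, TensorProduct.lid_tmul, one_smul]
  rw [hid, Bialgebra.counit_mul]

section ShiftModel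

variable {k : Type*} [Field k] {m n : ℕ}

noncomputable def shift (k : Type*) [Field k] (m : ℕ) : (ZMod m → k) →ₐ[k] (ZMod m → k) :=
  AlgHom.pi fun s => Pi.evalAlgHom k (fun _ => k) (s + 1)

theorem shift_apply (f : ZMod m → k) (s : ZMod m) : shift k m f s = f (s + 1) := rfl

theorem shift_pow_apply (t : ℕ) (f : ZMod m → k) (s : ZMod m) :
    ((shift k m).toLinearMap ^ t) f s = f (s + t) := by
  induction t generalizing s with
  | zero => simp
  | succ t ih =>
    rw [pow_succ', Module.End.mul_apply, AlgHom.toLinearMap_apply, shift_apply, ih]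
    push_cast
    ring_nf

theorem shift_pow_eq_one {N : ℕ} (hN : m ∣ N) : (shift k m).toLinearMap ^ N = 1 :=
  LinearMap.ext fun f => funext fun s => by
    rw [shift_pow_apply, (ZMod.natCast_eq_zero_iff N m).mpr hN, add_zero, Module.End.one_apply]

noncomputable def skewDeriv (u : ZMod m → k) : Module.End k (ZMod m → k) :=
  LinearMap.mulLeft k u * ((shift k m).toLinearMap - 1)

theorem skewDeriv_apply (u f : ZMod m → k) (s : ZMod m) :
    skewDeriv u f s = u s * (f (s + 1) - f s) := rfl

theorem skewDeriv_zero : skewDeriv (0 : ZMod m → k) = 0 :=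
  LinearMap.ext fun f => funext fun s => by simp [skewDeriv_apply]

theorem skewDeriv_mul (u f f' : ZMod m → k) :
    skewDeriv u (f * f') = skewDeriv u f * f' + shift k m f * skewDeriv u f' :=
  funext fun s => by simp only [skewDeriv_apply, Pi.mul_apply, Pi.add_apply, shift_apply]; ring

theorem qCommute_skewDeriv_shift {q : k} {u : ZMod m → k} (hu : ∀ s, u s = q * u (s + 1)) :
    QCommute q (skewDeriv u) (shift k m).toLinearMap :=
  LinearMap.ext fun f => funext fun s => by
    simp only [Module.End.mul_apply, LinearMap.smul_apply, Pi.smul_apply, smul_eq_mul,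
      AlgHom.toLinearMap_apply, skewDeriv_apply, shift_apply, hu s]
    ring

theorem skewDeriv_eq_mulLeft_neg_add (u : ZMod m → k) :
    skewDeriv u = LinearMap.mulLeft k (-u) + LinearMap.mulLeft k u * (shift k m).toLinearMap :=
  LinearMap.ext fun f => funext fun s => by
    simp only [skewDeriv_apply, LinearMap.add_apply, Module.End.mul_apply, LinearMap.mulLeft_apply,
      AlgHom.toLinearMap_apply, Pi.add_apply, Pi.mul_apply, Pi.neg_apply, shift_apply]
    ring

theorem qCommute_mulLeft_neg_mulLeft_mul_shift {q : k} {u : ZMod m → k}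
    (hu : ∀ s, u s = q * u (s + 1)) :
    QCommute q (LinearMap.mulLeft k (-u)) (LinearMap.mulLeft k u * (shift k m).toLinearMap) :=
  LinearMap.ext fun f => funext fun s => by
    simp only [Module.End.mul_apply, LinearMap.smul_apply, LinearMap.mulLeft_apply,
      AlgHom.toLinearMap_apply, Pi.smul_apply, Pi.mul_apply, Pi.neg_apply, shift_apply,
      smul_eq_mul, hu s]
    ring

theorem mulLeft_mul_shift_pow_apply {r : k} {u : ZMod m → k} (hu : ∀ s, u (s + 1) = r * u s)
    (t : ℕ) (f : ZMod m → k) (s : ZMod m) :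
    ((LinearMap.mulLeft k u * (shift k m).toLinearMap) ^ t) f s
      = r ^ (∑ i ∈ Finset.range t, i) * u s ^ t * f (s + t) := by
  induction t generalizing s with
  | zero => simp
  | succ t ih =>
    rw [pow_succ', Module.End.mul_apply, Module.End.mul_apply, LinearMap.mulLeft_apply,
      Pi.mul_apply, AlgHom.toLinearMap_apply, shift_apply, ih,
      Finset.sum_range_succ, hu, pow_add, show s + 1 + (t : ZMod m) = s + (t + 1 : ℕ) by
        push_cast; ring]
    ring

/-- Writing `skewDeriv u = Q + P` with `QP = q PQ`, the q-binomial theorem leaves only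
`Q^n + P^n`, and these cancel. -/
theorem skewDeriv_pow_eq_zero [NeZero n] {q : k} (hq : IsPrimitiveRoot q n) {u : ZMod n → k}
    (hu : ∀ s, u s = q * u (s + 1)) : skewDeriv u ^ n = 0 := by
  have hu' (s : ZMod n) : u (s + 1) = q⁻¹ * u s := by
    rw [hu s, inv_mul_cancel_left₀ (hq.ne_zero (NeZero.ne n))]
  have hsign : (-1 : k) ^ n = -(-1) ^ (n - 1) := by
    conv_lhs => rw [← Nat.sub_add_cancel (NeZero.one_le : 1 ≤ n), pow_succ]
    ring
  rw [skewDeriv_eq_mulLeft_neg_add, (qCommute_mulLeft_neg_mulLeft_mul_shift hu).add_pow,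
    Finset.sum_range_succ, Finset.sum_eq_single 0
      (fun ℓ hℓ h0 => by rw [hq.qbinom_eq_zero h0 (Finset.mem_range.mp hℓ), zero_smul])
      (fun h => absurd (Finset.mem_range.mpr (NeZero.pos n)) h)]
  refine LinearMap.ext fun f => funext fun s => ?_
  simp only [Nat.cast_zero, qbinom_zero_right, qbinom_self, pow_zero, one_mul, mul_one, one_smul,
    Nat.sub_zero, Nat.sub_self, LinearMap.add_apply, Pi.add_apply, LinearMap.pow_mulLeft,
    LinearMap.mulLeft_apply, Pi.mul_apply, Pi.pow_apply, Pi.neg_apply,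
    mulLeft_mul_shift_pow_apply hu', Finset.sum_range_id,
    hq.inv.pow_mul_pred_div_two (NeZero.pos n),
    ZMod.natCast_self, add_zero, LinearMap.zero_apply, Pi.zero_apply]
  rw [neg_pow, hsign]
  ring

theorem ZMod.exists_apply_eq_mul_apply_add_one [NeZero n] {q : k} (hq : q ^ n = 1) (c : k) :
    ∃ u : ZMod n → k, u 0 = c ∧ ∀ s, u s = q * u (s + 1) := by
  have hq0 : q ≠ 0 := by rintro rfl; simp [zero_pow (NeZero.ne n)] at hq
  have hr : q⁻¹ ^ n = 1 := by rw [inv_pow, hq, inv_one]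
  refine ⟨fun s => c * q⁻¹ ^ s.val, by simp, fun s => ?_⟩
  simp only
  rw [ZMod.val_add, ZMod.val_one_eq_one_mod, ← pow_eq_pow_mod _ hr, pow_add,
    ← pow_eq_pow_mod _ hr, pow_one]
  field_simp

end ShiftModel

namespace TaftData

variable {k H : Type*} [Field k] [Ring H] [HopfAlgebra k H] {n : ℕ} {q : k}
  (T : TaftData k n q H)

theorem qCommute : QCommute q T.x T.g := T.x_mul_g

theorem x_pow_eq_zero {j : ℕ} (hj : n ≤ j) : T.x ^ j = 0 := by
  rw [← Nat.add_sub_cancel' hj, pow_add, T.x_pow_n, zero_mul]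

theorem g_pow_add_self (i : ℕ) : T.g ^ (i + n) = T.g ^ i := by
  rw [pow_add, T.g_pow_n, mul_one]

theorem comul_g_pow_mul_x_pow (i j : ℕ) :
    Coalgebra.comul (R := k) (T.g ^ i * T.x ^ j)
      = ∑ ℓ ∈ Finset.range (j + 1), qbinom q j ℓ •
          ((T.g ^ (i + ℓ) * T.x ^ (j - ℓ)) ⊗ₜ[k] (T.g ^ i * T.x ^ ℓ)) := by
  have hq : QCommute q (T.x ⊗ₜ[k] (1 : H)) (T.g ⊗ₜ[k] T.x) := by
    rw [QCommute, Algebra.TensorProduct.tmul_mul_tmul, Algebra.TensorProduct.tmul_mul_tmul,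
      T.x_mul_g, one_mul, mul_one, TensorProduct.smul_tmul']
  rw [← Bialgebra.comulAlgHom_apply, map_mul, map_pow, map_pow, Bialgebra.comulAlgHom_apply,
    Bialgebra.comulAlgHom_apply, T.comul_g, T.comul_x, hq.add_pow, Finset.mul_sum,
    Algebra.TensorProduct.tmul_pow]
  refine Finset.sum_congr rfl fun ℓ _ => ?_
  rw [mul_smul_comm, Algebra.TensorProduct.tmul_pow, Algebra.TensorProduct.tmul_pow,
    Algebra.TensorProduct.tmul_mul_tmul, Algebra.TensorProduct.tmul_mul_tmul, one_pow, mul_one,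
    ← mul_assoc, ← pow_add]

theorem counit_g_pow_mul_x_pow (i j : ℕ) :
    Coalgebra.counit (R := k) (T.g ^ i * T.x ^ j) = if j = 0 then 1 else 0 := by
  rw [← Bialgebra.counitAlgHom_apply, map_mul, map_pow, map_pow, Bialgebra.counitAlgHom_apply,
    Bialgebra.counitAlgHom_apply, T.counit_g, T.counit_x, one_pow, one_mul, zero_pow_eq]

theorem lCont_g_pow_mul_x_pow (lam : H →ₗ[k] k) (i j : ℕ) :
    lCont k H lam (T.g ^ i * T.x ^ j)
      = ∑ ℓ ∈ Finset.range (j + 1),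
          (qbinom q j ℓ * lam (T.g ^ (i + ℓ) * T.x ^ (j - ℓ))) • (T.g ^ i * T.x ^ ℓ) := by
  rw [lCont, LinearMap.comp_apply, LinearMap.comp_apply, T.comul_g_pow_mul_x_pow, map_sum,
    map_sum]
  refine Finset.sum_congr rfl fun ℓ _ => ?_
  rw [map_smul, map_smul, TensorProduct.map_tmul, LinearMap.id_apply, LinearEquiv.coe_coe,
    TensorProduct.lid_tmul, smul_smul]

theorem linearMap_ext {M : Type*} [AddCommMonoid M] [Module k M] {f f' : H →ₗ[k] M}
    (h : ∀ i j, i < n → j < n → f (T.g ^ i * T.x ^ j) = f' (T.g ^ i * T.x ^ j)) : f = f' :=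
  T.basis.ext fun ⟨i, j⟩ => by rw [T.basis_eq]; exact h i j i.2 j.2

theorem linearMap_ext_g_pow_sub {M : Type*} [AddCommMonoid M] [Module k M] {f f' : H →ₗ[k] M}
    (h : ∀ i j, i ≤ n - 1 → j ≤ n - 1 →
      f (T.g ^ (n - i) * T.x ^ j) = f' (T.g ^ (n - i) * T.x ^ j)) : f = f' := by
  refine T.linearMap_ext fun i j hi hj => ?_
  rcases Nat.eq_zero_or_pos i with rfl | hi0
  · simpa [T.g_pow_n] using h 0 j (Nat.zero_le _) (by omega)
  · simpa [Nat.sub_sub_self hi.le] using h (n - i) j (by omega) (by omega)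

theorem adjoin_g_x : Algebra.adjoin k {T.g, T.x} = ⊤ := by
  refine eq_top_iff.mpr fun h _ => ?_
  rw [← T.basis.sum_repr h]
  refine Subalgebra.sum_mem _ fun p _ => Subalgebra.smul_mem _ ?_ _
  have hg : T.g ∈ Algebra.adjoin k {T.g, T.x} := Algebra.subset_adjoin (by simp)
  have hx : T.x ∈ Algebra.adjoin k {T.g, T.x} := Algebra.subset_adjoin (by simp)
  rw [T.basis_eq]
  exact Subalgebra.mul_mem _ (Subalgebra.pow_mem _ hg _) (Subalgebra.pow_mem _ hx _)

section Lift

variable {R : Type*} [Ring R] [Algebra k R] {a b : R}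

noncomputable def liftₗ (a b : R) : H →ₗ[k] R :=
  T.basis.constr k fun p => a ^ (p.1 : ℕ) * b ^ (p.2 : ℕ)

theorem liftₗ_g_pow_mul_x_pow (ha : a ^ n = 1) (hb : b ^ n = 0) (i j : ℕ) :
    T.liftₗ a b (T.g ^ i * T.x ^ j) = a ^ i * b ^ j := by
  rcases lt_or_ge j n with hj | hj
  · have hi : i % n < n := Nat.mod_lt _ (by omega)
    rw [pow_eq_pow_mod i T.g_pow_n, pow_eq_pow_mod i ha, ← T.basis_eq ⟨_, hi⟩ ⟨j, hj⟩, liftₗ,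
      Module.Basis.constr_basis]
  · rw [T.x_pow_eq_zero hj, ← Nat.add_sub_cancel' hj, pow_add, hb, zero_mul, mul_zero, mul_zero,
      map_zero]

theorem liftₗ_mul (ha : a ^ n = 1) (hb : b ^ n = 0) (hab : QCommute q b a) (h h' : H) :
    T.liftₗ a b (h * h') = T.liftₗ a b h * T.liftₗ a b h' := by
  have hmul : (LinearMap.mul k H).compr₂ (T.liftₗ a b)
      = (LinearMap.mul k R).compl₁₂ (T.liftₗ a b) (T.liftₗ a b) :=
    LinearMap.ext_basis T.basis T.basis fun ⟨i, j⟩ ⟨c, d⟩ => by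
      simp only [LinearMap.compr₂_apply, LinearMap.compl₁₂_apply, LinearMap.mul_apply',
        T.basis_eq, T.qCommute.mul_mul_mul, hab.mul_mul_mul, map_smul,
        T.liftₗ_g_pow_mul_x_pow ha hb]
  exact LinearMap.congr_fun₂ hmul h h'

noncomputable def lift (ha : a ^ n = 1) (hb : b ^ n = 0) (hab : QCommute q b a) : H →ₐ[k] R :=
  AlgHom.ofLinearMap (T.liftₗ a b) (by simpa using T.liftₗ_g_pow_mul_x_pow ha hb 0 0)
    (T.liftₗ_mul ha hb hab)

theorem lift_g_pow_mul_x_pow (ha : a ^ n = 1) (hb : b ^ n = 0) (hab : QCommute q b a)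
    (i j : ℕ) : T.lift ha hb hab (T.g ^ i * T.x ^ j) = a ^ i * b ^ j :=
  T.liftₗ_g_pow_mul_x_pow ha hb i j

theorem lift_g (ha : a ^ n = 1) (hb : b ^ n = 0) (hab : QCommute q b a) :
    T.lift ha hb hab T.g = a := by
  simpa using T.lift_g_pow_mul_x_pow ha hb hab 1 0

theorem lift_x (ha : a ^ n = 1) (hb : b ^ n = 0) (hab : QCommute q b a) :
    T.lift ha hb hab T.x = b := by
  simpa using T.lift_g_pow_mul_x_pow ha hb hab 0 1

theorem measuringSubalgebra_lift {A : Type*} [CommRing A] [Algebra k A] {G : A →ₐ[k] A}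
    {X : Module.End k A}
    (hG : G.toLinearMap ^ n = 1) (hX : X ^ n = 0) (hXG : QCommute q X G.toLinearMap)
    (hleib : ∀ a b, X (a * b) = X a * b + G a * X b) :
    measuringSubalgebra (T.lift hG hX hXG) = ⊤ := by
  rw [eq_top_iff, ← T.adjoin_g_x, Algebra.adjoin_le_iff]
  rintro h (rfl | rfl) <;> refine TensorProduct.ext' fun a b => ?_
  · simp [tensorAction, T.comul_g, endTensorEndAlgHom_tmul_tmul, T.lift_g]
  · simp [tensorAction, T.comul_x, endTensorEndAlgHom_tmul_tmul, T.lift_g, T.lift_x, hleib]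

end Lift

section PartialAction

variable {lam : H →ₗ[k] k}

theorem apply_mul_apply (hlam : IsPartialAction k H lam) (i j c d : ℕ) :
    lam (T.g ^ i * T.x ^ j) * lam (T.g ^ c * T.x ^ d)
      = ∑ ℓ ∈ Finset.range (j + 1), qbinom q j ℓ * lam (T.g ^ (i + ℓ) * T.x ^ (j - ℓ))
          * q ^ (c * ℓ) * lam (T.g ^ (i + c) * T.x ^ (ℓ + d)) := by
  rw [hlam.2, T.lCont_g_pow_mul_x_pow, Finset.sum_mul, map_sum]
  refine Finset.sum_congr rfl fun ℓ _ => ?_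
  rw [smul_mul_assoc, T.qCommute.mul_mul_mul, map_smul, map_smul, smul_eq_mul, smul_eq_mul]
  ring

theorem apply_g_pow_mul_apply (hlam : IsPartialAction k H lam) (i c d : ℕ) :
    lam (T.g ^ i) * lam (T.g ^ c * T.x ^ d) = lam (T.g ^ i) * lam (T.g ^ (i + c) * T.x ^ d) := by
  simpa using T.apply_mul_apply hlam i 0 c d

theorem apply_g_pow_mul_x_mul_apply (hlam : IsPartialAction k H lam) (i c d : ℕ) :
    lam (T.g ^ i * T.x) * lam (T.g ^ c * T.x ^ d)
      = lam (T.g ^ i * T.x) * lam (T.g ^ (i + c) * T.x ^ d)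
        + lam (T.g ^ (i + 1)) * q ^ c * lam (T.g ^ (i + c) * T.x ^ (d + 1)) := by
  have h := T.apply_mul_apply hlam i 1 c d
  have h11 : qbinom q 1 1 = 1 := by exact_mod_cast qbinom_self q 1
  simp only [Finset.sum_range_succ, Finset.sum_range_zero, zero_add] at h
  simpa [h11, add_comm 1 d] using h

theorem pow_mul_apply_x_pow_succ (hlam : IsPartialAction k H lam) (hn : 0 < n) (m d : ℕ) :
    q ^ (m + 1) * lam (T.g ^ m * T.x ^ (d + 1))
      = lam (T.g ^ (n - 1) * T.x) * (lam (T.g ^ (m + 1) * T.x ^ d) - lam (T.g ^ m * T.x ^ d)) := by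
  have h := T.apply_g_pow_mul_x_mul_apply hlam (n - 1) (m + 1) d
  rw [Nat.sub_add_cancel hn, show n - 1 + (m + 1) = m + n by omega, T.g_pow_add_self,
    T.g_pow_n, hlam.1] at h
  linear_combination -h

theorem exists_apply_g_pow_eq_ite (hlam : IsPartialAction k H lam) (hn : 0 < n) :
    ∃ a, 0 < a ∧ a ∣ n ∧ ∀ i, lam (T.g ^ i) = if a ∣ i then 1 else 0 := by
  have hidem : ∀ i, lam (T.g ^ i) = 0 ∨ lam (T.g ^ i) = 1 := by
    intro i
    have h := T.apply_g_pow_mul_apply hlam i 0 0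
    simp only [pow_zero, mul_one, add_zero, hlam.1] at h
    rcases mul_eq_zero.mp (show lam (T.g ^ i) * (lam (T.g ^ i) - 1) = 0 by
      linear_combination -h) with h | h
    · exact Or.inl h
    · exact Or.inr (sub_eq_zero.mp h)
  obtain ⟨a, ha, hrow⟩ := Nat.exists_forall_iff_dvd_of_add (P := fun i => lam (T.g ^ i) = 1) hn
    (by simp [T.g_pow_n, hlam.1]) fun i c hi => by
      have h := T.apply_g_pow_mul_apply hlam i c 0
      simp only [pow_zero, mul_one, hi, one_mul] at h
      rw [h]
  refine ⟨a, ha, (hrow n).mp (by simp [T.g_pow_n, hlam.1]), fun i => ?_⟩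
  split_ifs with hi
  · exact (hrow i).mpr hi
  · exact (hidem i).resolve_right (mt (hrow i).mp hi)

theorem eq_counit_of_apply_g (hlam : IsPartialAction k H lam) (hq : q ≠ 0) (hg : lam T.g = 1) :
    lam = Coalgebra.counit := by
  have hrow : ∀ i, lam (T.g ^ i) = 1 := by
    intro i
    induction i with
    | zero => simpa using hlam.1
    | succ i ih => simpa [hg, ih, add_comm 1 i] using (T.apply_g_pow_mul_apply hlam 1 i 0).symm
  refine T.linearMap_ext fun i j _ _ => ?_
  rw [T.counit_g_pow_mul_x_pow]
  rcases j with _ | d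
  · simpa using hrow i
  · have h := T.apply_g_pow_mul_x_mul_apply hlam 0 i d
    rw [zero_add, zero_add, pow_one, hg, one_mul] at h
    have h' : q ^ i * lam (T.g ^ i * T.x ^ (d + 1)) = 0 := by linear_combination -h
    simpa using (mul_eq_zero.mp h').resolve_left (pow_ne_zero i hq)

theorem apply_g_pow_n_sub_one_mul_x (hlam : IsPartialAction k H lam) (hn : 0 < n)
    (hg : lam T.g = 0) : lam (T.g ^ (n - 1) * T.x) = -(q * lam T.x) := by
  have h := T.pow_mul_apply_x_pow_succ hlam hn 0 0
  simp only [zero_add, pow_one, pow_zero, mul_one, one_mul, hg, hlam.1] at h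
  linear_combination h

theorem apply_eq_ite_of_apply_g_pow (hlam : IsPartialAction k H lam) (hn : 0 < n) (hq : q ≠ 0)
    {a : ℕ} (ha : 1 < a) (hqa : q ^ a ≠ 1)
    (hrow : ∀ i, lam (T.g ^ i) = if a ∣ i then 1 else 0) (i j : ℕ) :
    lam (T.g ^ i * T.x ^ j) = if j = 0 ∧ a ∣ i then 1 else 0 := by
  have hg : lam T.g = 0 := by
    simpa [Nat.dvd_one, ha.ne'] using hrow 1
  have hga1 : lam (T.g ^ (a + 1)) = 0 := by
    rw [hrow, if_neg fun h => ha.ne' (Nat.dvd_one.mp ((Nat.dvd_add_right dvd_rfl).mp h))]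
  have hga : lam (T.g ^ a) = 1 := by rw [hrow, if_pos dvd_rfl]
  have hβ := T.apply_g_pow_n_sub_one_mul_x hlam hn hg
  -- `γ = λ(g^a x)` satisfies `q^a γ = λ(x)` and `γ λ(x) = γ²`, which forces `λ(x) = 0`
  have hγ : q ^ a * lam (T.g ^ a * T.x) = lam T.x := by
    have h := T.pow_mul_apply_x_pow_succ hlam hn a 0
    simp only [zero_add, pow_one, pow_zero, mul_one, hga1, hga, hβ] at h
    apply mul_left_cancel₀ hq
    linear_combination h
  have hγ2 : lam (T.g ^ a * T.x) * lam T.x = lam (T.g ^ a * T.x) * lam (T.g ^ a * T.x) := by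
    simpa [hga1] using T.apply_g_pow_mul_x_mul_apply hlam a 0 1
  have hα : lam T.x = 0 := by
    by_contra hα
    have hγ0 : lam (T.g ^ a * T.x) ≠ 0 := fun h => hα (by rw [← hγ, h, mul_zero])
    have h := mul_left_cancel₀ hγ0 hγ2
    exact hqa (mul_right_cancel₀ hα (by rw [one_mul]; nth_rw 1 [h]; exact hγ))
  rcases j with _ | d
  · simpa using hrow i
  · have h := T.pow_mul_apply_x_pow_succ hlam hn i d
    rw [hβ, hα, mul_zero, neg_zero, zero_mul] at h
    simpa using (mul_eq_zero.mp h).resolve_left (pow_ne_zero _ hq)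

theorem apply_eq_lamAlphaCoeff (hlam : IsPartialAction k H lam) (hn : 2 ≤ n) (hqn : q ^ n = 1)
    (hrow : ∀ i, lam (T.g ^ i) = if n ∣ i then 1 else 0) {i j : ℕ} (hi : i ≤ n - 1)
    (hj : j ≤ n - 1) : lam (T.g ^ (n - i) * T.x ^ j) = lamAlphaCoeff q (lam T.x) i j := by
  have hq : q ≠ 0 := by rintro rfl; simp [zero_pow (by omega : n ≠ 0)] at hqn
  have hg : lam T.g = 0 := by
    rw [← pow_one T.g, hrow, if_neg (Nat.not_dvd_of_pos_of_lt one_pos (by omega))]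
  have hβ := T.apply_g_pow_n_sub_one_mul_x hlam (by omega) hg
  have hgn (d : ℕ) : T.g ^ (n - 0) * T.x ^ d = T.x ^ d := by rw [Nat.sub_zero, T.g_pow_n, one_mul]
  induction j generalizing i with
  | zero =>
    have hdvd : n ∣ n - i ↔ i = 0 :=
      ⟨fun h => by_contra fun h0 => Nat.not_dvd_of_pos_of_lt (by omega) (by omega) h,
        fun h => by rw [h, Nat.sub_zero]⟩
    rw [pow_zero, mul_one, hrow, lamAlphaCoeff_zero_right]
    simp only [hdvd]
  | succ j ih =>
    rcases i with _ | s
    · have h := T.pow_mul_apply_x_pow_succ hlam (by omega) 0 j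
      have h1 := ih (i := n - 1) le_rfl (by omega)
      have h0 := ih (i := 0) (by omega) (by omega)
      rw [Nat.sub_sub_self (by omega), pow_one, lamAlphaCoeff_of_lt _ _ (by omega)] at h1
      rw [hgn, lamAlphaCoeff_zero_left] at h0
      simp only [zero_add, pow_one, pow_zero, one_mul] at h
      rw [hβ, h1, h0] at h
      rw [hgn, lamAlphaCoeff_zero_left]
      apply mul_left_cancel₀ hq
      linear_combination h
    · have h := T.pow_mul_apply_x_pow_succ hlam (by omega) (n - (s + 1)) j
      rw [show n - (s + 1) + 1 = n - s by omega, hβ, ih (by omega) (by omega),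
        ih hi (by omega)] at h
      rw [lamAlphaCoeff_succ_succ]
      apply mul_left_cancel₀ (pow_ne_zero (n - s) hq)
      rw [h]
      have hpow : q ^ (n - s) * q ^ (s + 1) = q := by
        rw [← pow_add, show n - s + (s + 1) = n + 1 by omega, pow_succ, hqn, one_mul]
      linear_combination (lam T.x * (lamAlphaCoeff q (lam T.x) s j
        - lamAlphaCoeff q (lam T.x) (s + 1) j)) * hpow

end PartialAction

section ShiftModel

variable {m : ℕ} {u : ZMod m → k}

noncomputable def shiftModel (hm : m ∣ n) (hu : ∀ s, u s = q * u (s + 1))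
    (hX : skewDeriv u ^ n = 0) : H →ₗ[k] k :=
  evalAt (T.lift (shift_pow_eq_one hm) hX (qCommute_skewDeriv_shift hu))
    (Pi.evalAlgHom k (fun _ => k) 0) (Pi.single 0 1)

variable (hm : m ∣ n) (hu : ∀ s, u s = q * u (s + 1)) (hX : skewDeriv u ^ n = 0)

theorem isPartialAction_shiftModel : IsPartialAction k H (T.shiftModel hm hu hX) :=
  isPartialAction_evalAt (T.measuringSubalgebra_lift _ _ _ (skewDeriv_mul u)) (by simp)
    fun w => by
      rw [← Pi.single_mul_left, Pi.evalAlgHom_apply, one_mul, ← Pi.single_smul', smul_eq_mul,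
        mul_one]

theorem shiftModel_g_pow (i : ℕ) :
    T.shiftModel hm hu hX (T.g ^ i) = if m ∣ i then 1 else 0 := by
  rw [shiftModel, evalAt_apply, map_pow, lift_g, Pi.evalAlgHom_apply, shift_pow_apply, zero_add,
    Pi.single_apply]
  simp only [ZMod.natCast_eq_zero_iff]

theorem shiftModel_x [Fact (1 < m)] : T.shiftModel hm hu hX T.x = -u 0 := by
  rw [shiftModel, evalAt_apply, lift_x, Pi.evalAlgHom_apply, skewDeriv_apply, zero_add,
    Pi.single_eq_same, Pi.single_eq_of_ne one_ne_zero]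
  ring

end ShiftModel

section Sufficiency

variable {lam : H →ₗ[k] k}

theorem isPartialAction_of_apply_eq_ite (hq : IsPrimitiveRoot q n) {a : ℕ} (ha : 1 < a)
    (han : a < n) (hm : a ∣ n)
    (hval : ∀ i j, i < n → j < n → lam (T.g ^ i * T.x ^ j) = if j = 0 ∧ a ∣ i then 1 else 0) :
    IsPartialAction k H lam := by
  have hu : ∀ s : ZMod a, (0 : ZMod a → k) s = q * (0 : ZMod a → k) (s + 1) := by simp
  have hX : skewDeriv (0 : ZMod a → k) ^ n = 0 := by rw [skewDeriv_zero, zero_pow (by omega)]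
  have hlam' := T.isPartialAction_shiftModel hm hu hX
  convert hlam'
  refine T.linearMap_ext fun i j hi hj => ?_
  rw [hval i j hi hj, T.apply_eq_ite_of_apply_g_pow hlam' (by omega) (hq.ne_zero (by omega)) ha
    (hq.pow_ne_one_of_pos_of_lt (by omega) han) (T.shiftModel_g_pow hm hu hX)]

theorem isPartialAction_of_apply_eq_lamAlphaCoeff (hn : 2 ≤ n) (hq : IsPrimitiveRoot q n) (α : k)
    (hval : ∀ i j, i ≤ n - 1 → j ≤ n - 1 →
      lam (T.g ^ (n - i) * T.x ^ j) = lamAlphaCoeff q α i j) :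
    IsPartialAction k H lam := by
  have : NeZero n := ⟨by omega⟩
  have : Fact (1 < n) := ⟨by omega⟩
  obtain ⟨u, hu0, hu⟩ := ZMod.exists_apply_eq_mul_apply_add_one hq.pow_eq_one (-α)
  have hX := skewDeriv_pow_eq_zero hq hu
  have hlam' := T.isPartialAction_shiftModel dvd_rfl hu hX
  have hx : T.shiftModel dvd_rfl hu hX T.x = α := by rw [T.shiftModel_x, hu0, neg_neg]
  convert hlam'
  refine T.linearMap_ext_g_pow_sub fun i j hi hj => ?_
  rw [hval i j hi hj, T.apply_eq_lamAlphaCoeff hlam' hn hq.pow_eq_one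
    (T.shiftModel_g_pow dvd_rfl hu hX) hi hj, hx]

end Sufficiency

end TaftData

/-- Theorem 3.1.1: a linear map `λ : T_n(q) → k` is a partial action of the Taft algebra
`T_n(q)` on `k` if and only if `λ = ε` (the counit, i.e. the global action), or `λ = λ_N^0`
for some non-trivial subgroup `N` of `⟨g⟩ ≅ C_n` (i.e. `{1} ≠ N ≠ ⟨g⟩`; such subgroups are
exactly the `N = ⟨g^a⟩` with `n = a·b`, `2 ≤ a`, `2 ≤ b`, and then `g^i ∈ N ↔ a ∣ i` for
`0 ≤ i ≤ n−1`), or `λ = λ_α` for some `α ∈ k`. -/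
theorem thm_3_1_1 {k H : Type*} [Field k] [Ring H] [HopfAlgebra k H]
    {n : ℕ} (hn : 2 ≤ n) {q : k} (hq : IsPrimitiveRoot q n)
    (T : TaftData k n q H) (lam : H →ₗ[k] k) :
    IsPartialAction k H lam ↔
      (lam = Coalgebra.counit (R := k)) ∨
      (∃ a b : ℕ, n = a * b ∧ 2 ≤ a ∧ 2 ≤ b ∧
        ∀ i j : ℕ, i ≤ n - 1 → j ≤ n - 1 →
          lam (T.g ^ i * T.x ^ j) = if j = 0 ∧ a ∣ i then 1 else 0) ∨
      (∃ α : k, ∀ i j : ℕ, i ≤ n - 1 → j ≤ n - 1 →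
        lam (T.g ^ (n - i) * T.x ^ j) =
          (-1 : k) ^ i * q ^ (i * (i + 1) / 2) * qbinom q j (i : ℤ) * α ^ j) := by
  have hq0 : q ≠ 0 := hq.ne_zero (by omega)
  constructor
  · intro hlam
    obtain ⟨a, ha, ⟨b, hab⟩, hrow⟩ := T.exists_apply_g_pow_eq_ite hlam (by omega)
    have han : a ≤ n := Nat.le_of_dvd (by omega) ⟨b, hab⟩
    rcases (by omega : a = 1 ∨ a = n ∨ 1 < a ∧ a < n) with rfl | rfl | ⟨ha1, han⟩
    · exact Or.inl (T.eq_counit_of_apply_g hlam hq0 (by simpa using hrow 1))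
    · exact Or.inr (Or.inr ⟨lam T.x, fun i j hi hj =>
        T.apply_eq_lamAlphaCoeff hlam hn hq.pow_eq_one hrow hi hj⟩)
    · have hb : 2 ≤ b := by
        by_contra hb
        have := Nat.mul_le_mul_left a (show b ≤ 1 by omega)
        omega
      exact Or.inr (Or.inl ⟨a, b, hab, ha1, hb, fun i j _ _ =>
        T.apply_eq_ite_of_apply_g_pow hlam (by omega) hq0 ha1
          (hq.pow_ne_one_of_pos_of_lt (by omega) han) hrow i j⟩)
  · rintro (rfl | ⟨a, b, rfl, ha, hb, hval⟩ | ⟨α, hval⟩)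
    · exact isPartialAction_counit
    · exact T.isPartialAction_of_apply_eq_ite hq ha (by nlinarith) (dvd_mul_right a b)
        fun i j hi hj => hval i j (by omega) (by omega)
    · exact T.isPartialAction_of_apply_eq_lamAlphaCoeff hn hq α hval
end

section
/- Every partial action of the Taft algebra T_n(q) on its base field k is symmetric; that is, every linear map λ : T_n(q) → k satisfying λ(1) = 1 and λ(h)λ(y) = Σ λ(h₁)λ(h₂y) for all h, y ∈ T_n(q) also satisfies λ(h)λ(y) = Σ λ(h₁y)λ(h₂) for all h, y ∈ T_n(q). (Theorem 3.1.10) -/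
open scoped TensorProduct

/-!
Put `u = g^{n-1} = g⁻¹` and `w = u x`: then `u` is group-like and `Δw = w ⊗ u + 1 ⊗ w`. The
elements `h` with `λ(h)λ(y) = Σ λ(h₁y)λ(h₂)` for all `y` form a subspace, which contains every
group-like element, since for those both identities say `λ(h)λ(y) = λ(h)λ(hy)`. The partial action
axiom at `w` gives `λ(wz) = λ(w)(λ(z) − λ(uz))`, and with it one checks that the subspace contains
`wh` as soon as it contains `h` and `uh`. As `u g^{i+1} x^j = g^i x^j` and
`w g^{i+1} x^j = q^{i+1} g^i x^{j+1}` with `q ≠ 0`, induction on `j` puts the whole basis in it.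
-/

section PartialAction

variable {k H : Type*} [CommRing k] [Ring H] [Bialgebra k H]

lemma lCont_of_comul_eq_tmul_self (f : H →ₗ[k] k) {h : H}
    (hh : Coalgebra.comul (R := k) h = h ⊗ₜ h) : lCont k H f h = f h • h := by
  simp [lCont, hh]

lemma rCont_of_comul_eq_tmul_self (f : H →ₗ[k] k) {h : H}
    (hh : Coalgebra.comul (R := k) h = h ⊗ₜ h) : rCont k H f h = f h • h := by
  simp [rCont, hh]

lemma rCont_add (f f' : H →ₗ[k] k) : rCont k H (f + f') = rCont k H f + rCont k H f' := by
  simp [rCont, TensorProduct.map_add_right, LinearMap.add_comp, LinearMap.comp_add]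

lemma rCont_smul (c : k) (f : H →ₗ[k] k) : rCont k H (c • f) = c • rCont k H f := by
  simp [rCont, TensorProduct.map_smul_right, LinearMap.smul_comp, LinearMap.comp_smul]

lemma rid_map_tmul_mul (f : H →ₗ[k] k) (p r : H) (t : H ⊗[k] H) :
    TensorProduct.rid k H (TensorProduct.map LinearMap.id f ((p ⊗ₜ r) * t)) =
      p * TensorProduct.rid k H
        (TensorProduct.map LinearMap.id (f ∘ₗ LinearMap.mulLeft k r) t) := by
  induction t using TensorProduct.induction_on with
  | zero => simp
  | tmul a b => simp [Algebra.TensorProduct.tmul_mul_tmul]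
  | add t t' ht ht' => rw [mul_add, map_add, map_add, ht, ht', map_add, map_add, mul_add]

lemma rCont_mul_of_comul_eq_tmul_self (f : H →ₗ[k] k) {u : H}
    (hu : Coalgebra.comul (R := k) u = u ⊗ₜ u) (b : H) :
    rCont k H f (u * b) = u * rCont k H (f ∘ₗ LinearMap.mulLeft k u) b := by
  rw [rCont, LinearMap.comp_apply, LinearMap.comp_apply, Bialgebra.comul_mul, hu]
  exact rid_map_tmul_mul f u u _

lemma rCont_mul_of_comul_eq_skew (f : H →ₗ[k] k) {u w : H}
    (hw : Coalgebra.comul (R := k) w = w ⊗ₜ u + 1 ⊗ₜ w) (b : H) :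
    rCont k H f (w * b) =
      w * rCont k H (f ∘ₗ LinearMap.mulLeft k u) b + rCont k H (f ∘ₗ LinearMap.mulLeft k w) b := by
  simp only [rCont, LinearMap.comp_apply, LinearEquiv.coe_coe, Bialgebra.comul_mul, hw, add_mul,
    map_add, rid_map_tmul_mul, one_mul]

def symmSubmodule (lam : H →ₗ[k] k) : Submodule k H where
  carrier := {h | ∀ y, lam h * lam y = lam (rCont k H lam h * y)}
  zero_mem' := by simp
  add_mem' {a b} ha hb y := by simp [add_mul, ha y, hb y]
  smul_mem' c h hh y := by simp [mul_assoc, hh y]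

lemma mem_symmSubmodule {lam : H →ₗ[k] k} {h : H} :
    h ∈ symmSubmodule lam ↔ ∀ y, lam h * lam y = lam (rCont k H lam h * y) :=
  Iff.rfl

variable {lam : H →ₗ[k] k}

lemma IsPartialAction.mem_symmSubmodule_of_comul_eq_tmul_self (hlam : IsPartialAction k H lam)
    {h : H} (hh : Coalgebra.comul (R := k) h = h ⊗ₜ h) : h ∈ symmSubmodule lam := by
  intro y
  simpa [lCont_of_comul_eq_tmul_self lam hh, rCont_of_comul_eq_tmul_self lam hh] using hlam.2 h y

lemma IsPartialAction.comp_mulLeft_of_comul_eq_skew (hlam : IsPartialAction k H lam) {u w : H}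
    (hw : Coalgebra.comul (R := k) w = w ⊗ₜ u + 1 ⊗ₜ w) :
    lam ∘ₗ LinearMap.mulLeft k w + lam w • (lam ∘ₗ LinearMap.mulLeft k u) = lam w • lam := by
  have hl : lCont k H lam w = lam w • u + w := by simp [lCont, hw, hlam.1]
  ext z
  simpa [hl, add_mul, add_comm] using (hlam.2 w z).symm

lemma IsPartialAction.mul_mem_symmSubmodule (hlam : IsPartialAction k H lam) {u w h : H}
    (hu : Coalgebra.comul (R := k) u = u ⊗ₜ u) (hw : Coalgebra.comul (R := k) w = w ⊗ₜ u + 1 ⊗ₜ w)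
    (h₁ : h ∈ symmSubmodule lam) (h₂ : u * h ∈ symmSubmodule lam) : w * h ∈ symmSubmodule lam := by
  have hlw := hlam.comp_mulLeft_of_comul_eq_skew hw
  set R := rCont k H (lam ∘ₗ LinearMap.mulLeft k u) h with hR
  have hRw : rCont k H (lam ∘ₗ LinearMap.mulLeft k w) h = lam w • rCont k H lam h - lam w • R := by
    have := congrArg (fun f => rCont k H f h) hlw
    simp only [rCont_add, rCont_smul, LinearMap.add_apply, LinearMap.smul_apply] at this
    exact eq_sub_of_add_eq this
  have hmul (z : H) : lam (w * z) = lam w * lam z - lam w * lam (u * z) := by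
    simpa [eq_sub_iff_add_eq] using LinearMap.congr_fun hlw z
  intro y
  have hwR := hmul (R * y)
  rw [← mul_assoc u R y, ← rCont_mul_of_comul_eq_tmul_self lam hu] at hwR
  rw [rCont_mul_of_comul_eq_skew lam hw, hRw]
  simp only [add_mul, sub_mul, smul_mul_assoc, map_add, map_sub, map_smul, smul_eq_mul,
    mul_assoc, ← hR, hwR, hmul h]
  linear_combination lam w * h₁ y - lam w * h₂ y

end PartialAction

namespace TaftData

variable {k H : Type*} [Field k] [Ring H] [HopfAlgebra k H] {n : ℕ} {q : k}
  (T : TaftData k n q H)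

lemma comul_g_pow (m : ℕ) : Coalgebra.comul (R := k) (T.g ^ m) = (T.g ^ m) ⊗ₜ (T.g ^ m) := by
  rw [Bialgebra.comul_pow, T.comul_g, Algebra.TensorProduct.tmul_pow]

lemma x_mul_g_pow (m : ℕ) : T.x * T.g ^ m = q ^ m • (T.g ^ m * T.x) := by
  induction m with
  | zero => simp
  | succ m ih =>
    rw [pow_succ, ← mul_assoc, ih, smul_mul_assoc, mul_assoc, T.x_mul_g, mul_smul_comm,
      smul_smul, ← mul_assoc, ← pow_succ]

lemma g_pow_pred_mul_g_pow_succ (hn : 0 < n) (i : ℕ) : T.g ^ (n - 1) * T.g ^ (i + 1) = T.g ^ i := by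
  rw [← pow_add, show n - 1 + (i + 1) = n + i by omega, pow_add, T.g_pow_n, one_mul]

lemma comul_g_pow_pred_mul_x (hn : 0 < n) :
    Coalgebra.comul (R := k) (T.g ^ (n - 1) * T.x) =
      (T.g ^ (n - 1) * T.x) ⊗ₜ (T.g ^ (n - 1)) + 1 ⊗ₜ (T.g ^ (n - 1) * T.x) := by
  have hinv : T.g ^ (n - 1) * T.g = 1 := by simpa using T.g_pow_pred_mul_g_pow_succ hn 0
  rw [Bialgebra.comul_mul, comul_g_pow, T.comul_x, mul_add, Algebra.TensorProduct.tmul_mul_tmul,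
    Algebra.TensorProduct.tmul_mul_tmul, mul_one, hinv]

lemma g_pow_pred_mul_x_mul (hn : 0 < n) (i j : ℕ) :
    T.g ^ (n - 1) * T.x * (T.g ^ (i + 1) * T.x ^ j) = q ^ (i + 1) • (T.g ^ i * T.x ^ (j + 1)) := by
  rw [mul_assoc, ← mul_assoc T.x, x_mul_g_pow, smul_mul_assoc, mul_smul_comm, ← mul_assoc,
    ← mul_assoc, g_pow_pred_mul_g_pow_succ T hn, mul_assoc, ← pow_succ']

lemma g_pow_mul_x_pow_mem_symmSubmodule {lam : H →ₗ[k] k} (hlam : IsPartialAction k H lam)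
    (hn : 0 < n) (hq : q ≠ 0) (j i : ℕ) :
    T.g ^ i * T.x ^ j ∈ symmSubmodule lam := by
  induction j generalizing i with
  | zero => simpa using hlam.mem_symmSubmodule_of_comul_eq_tmul_self (T.comul_g_pow i)
  | succ j ih =>
    have hw := hlam.mul_mem_symmSubmodule (T.comul_g_pow (n - 1)) (T.comul_g_pow_pred_mul_x hn)
      (ih (i + 1)) (by rw [← mul_assoc, T.g_pow_pred_mul_g_pow_succ hn]; exact ih i)
    rwa [T.g_pow_pred_mul_x_mul hn, Submodule.smul_mem_iff _ (pow_ne_zero _ hq)] at hw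

end TaftData

/-- Theorem 3.1.10: every partial action of the Taft algebra `T_n(q)` on its base field `k`
is symmetric: every linear map `λ : T_n(q) → k` with `λ(1) = 1` and
`λ(h)λ(y) = Σ λ(h₁)λ(h₂y)` for all `h, y` also satisfies `λ(h)λ(y) = Σ λ(h₁y)λ(h₂)`
for all `h, y`. -/
theorem thm_3_1_10 {k H : Type*} [Field k] [Ring H] [HopfAlgebra k H]
    {n : ℕ} (hn : 2 ≤ n) {q : k} (hq : IsPrimitiveRoot q n)
    (T : TaftData k n q H) (lam : H →ₗ[k] k)
    (hlam : IsPartialAction k H lam) :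
    IsSymmPartialAction k H lam := by
  have hspan : symmSubmodule lam = ⊤ := by
    rw [eq_top_iff, ← T.basis.span_eq, Submodule.span_le]
    rintro _ ⟨⟨i, j⟩, rfl⟩
    rw [T.basis_eq]
    exact T.g_pow_mul_x_pow_mem_symmSubmodule hlam (by omega) (hq.ne_zero (by omega)) j i
  exact ⟨hlam, fun h => mem_symmSubmodule.mp (hspan ▸ Submodule.mem_top)⟩
end
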